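/- arXiv:0711.1893 — 5 statements merged into one kernel-verified Lean document; each statement's English description precedes it below -/
import Mathlib

section
/- The function x ↦ log((e^x − 1)/x) − x is strictly decreasing on (1, ∞). Equivalently, for 1 < λ < μ, we have log((e^μ − 1)/μ) − log((e^λ − 1)/λ) < μ − λ. -/
/-! Since `log ((exp x - 1) / x) - x = log ((1 - exp (-x)) / x)` and `(1 - exp (-x)) / x` is the slope
of the chord of `exp` between `-x` and `0`, strict convexity of `exp` makes it strictly decreasing
in `x > 0`. -/

open Real Set

theorem strictAntiOn_one_sub_exp_neg_div_self :
    StrictAntiOn (fun x : ℝ => (1 - exp (-x)) / x) (Ioi 0) := by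
  intro x (hx : 0 < x) y (hy : 0 < y) hxy
  have hslope := strictConvexOn_exp.secant_strict_mono (mem_univ 0) (mem_univ (-y))
    (mem_univ (-x)) (by linarith) (by linarith) (neg_lt_neg hxy)
  rw [← neg_div_neg_eq (exp (-y) - _), ← neg_div_neg_eq (exp (-x) - _)] at hslope
  simpa using hslope

theorem one_sub_exp_neg_div_self_pos {x : ℝ} (hx : 0 < x) : 0 < (1 - exp (-x)) / x :=
  div_pos (sub_pos.2 (exp_lt_one_iff.2 (neg_lt_zero.2 hx))) hx

theorem log_exp_sub_one_div_self_sub_self {x : ℝ} (hx : 0 < x) :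
    log ((exp x - 1) / x) - x = log ((1 - exp (-x)) / x) := by
  have hquot : 0 < (exp x - 1) / x := div_pos (sub_pos.2 (one_lt_exp_iff.2 hx)) hx
  calc log ((exp x - 1) / x) - x = log ((exp x - 1) / x / exp x) := by
        rw [log_div hquot.ne' (exp_pos x).ne', log_exp]
    _ = log ((1 - exp (-x)) / x) := by
        rw [exp_neg]
        field_simp

theorem strictAntiOn_log_exp_sub_one_div_self_sub_self :
    StrictAntiOn (fun x : ℝ => log ((exp x - 1) / x) - x) (Ioi 0) := by
  intro x (hx : 0 < x) y (hy : 0 < y) hxy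
  simp only [log_exp_sub_one_div_self_sub_self hx, log_exp_sub_one_div_self_sub_self hy]
  exact log_lt_log (one_sub_exp_neg_div_self_pos hy) (strictAntiOn_one_sub_exp_neg_div_self hx hy hxy)

theorem stmt_0 :
    StrictAntiOn (fun x : ℝ => Real.log ((Real.exp x - 1) / x) - x) (Set.Ioi 1) ∧
    ∀ l m : ℝ, 1 < l → l < m →
      Real.log ((Real.exp m - 1) / m) - Real.log ((Real.exp l - 1) / l) < m - l := by
  have hanti := strictAntiOn_log_exp_sub_one_div_self_sub_self.mono (Ioi_subset_Ioi zero_le_one)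
  refine ⟨hanti, fun l m hl hlm => ?_⟩
  have := hanti hl (hl.trans hlm) hlm
  simp only at this
  linarith
end

section
/- The function c ↦ c·q(c) is strictly decreasing on (1, ∞), where q(c) ∈ (0,1) is the unique solution of q = e^{−c(1−q)}. -/
/-! Multiplying `q = exp (-c (1 - q))` by `c exp (-c q)` gives
`(c q) e^{-c q} = c e^{-c}`. The map `x ↦ x e^{-x}` increases on `(-∞, 1]` and decreases on
`[1, ∞)`, so `c q` is the preimage in `(-∞, 1)` of the decreasing value `c e^{-c}`. -/

open Real Set

theorem hasDerivAt_mul_exp_neg (x : ℝ) :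
    HasDerivAt (fun x => x * exp (-x)) ((1 - x) * exp (-x)) x := by
  have hexp : HasDerivAt (fun x => exp (-x)) (-exp (-x)) x := by
    simpa using (hasDerivAt_neg x).exp
  exact ((hasDerivAt_id' x).mul hexp).congr_deriv (by ring)

theorem continuous_mul_exp_neg : Continuous fun x : ℝ => x * exp (-x) := by
  fun_prop

theorem strictMonoOn_mul_exp_neg : StrictMonoOn (fun x => x * exp (-x)) (Iic 1) := by
  refine strictMonoOn_of_deriv_pos (convex_Iic 1) continuous_mul_exp_neg.continuousOn ?_
  intro x hx
  rw [interior_Iic, mem_Iio] at hx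
  rw [(hasDerivAt_mul_exp_neg x).deriv]
  exact mul_pos (by linarith) (exp_pos _)

theorem strictAntiOn_mul_exp_neg : StrictAntiOn (fun x => x * exp (-x)) (Ici 1) := by
  refine strictAntiOn_of_deriv_neg (convex_Ici 1) continuous_mul_exp_neg.continuousOn ?_
  intro x hx
  rw [interior_Ici, mem_Ioi] at hx
  rw [(hasDerivAt_mul_exp_neg x).deriv]
  exact mul_neg_of_neg_of_pos (by linarith) (exp_pos _)

theorem mul_mul_exp_neg_eq_of_eq_exp {c q : ℝ} (h : q = exp (-c * (1 - q))) :
    c * q * exp (-(c * q)) = c * exp (-c) := by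
  calc c * q * exp (-(c * q)) = c * (exp (-c * (1 - q)) * exp (-(c * q))) := by rw [← h]; ring
    _ = c * exp (-c) := by rw [← exp_add]; ring_nf

theorem mul_lt_one_of_eq_exp {c q : ℝ} (hc : 1 ≤ c) (hq : q ≠ 1)
    (h : q = exp (-c * (1 - q))) : c * q < 1 := by
  by_contra! hcq
  have hcq_eq : c * q = c :=
    strictAntiOn_mul_exp_neg.injOn hcq hc (mul_mul_exp_neg_eq_of_eq_exp h)
  exact hq (mul_eq_left₀ (by linarith) |>.mp hcq_eq)

theorem stmt_6 (q : ℝ → ℝ)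
    (hq : ∀ c : ℝ, 1 < c → q c ∈ Set.Ioo (0 : ℝ) 1 ∧ q c = Real.exp (-c * (1 - q c))) :
    StrictAntiOn (fun c => c * q c) (Set.Ioi 1) := by
  have below_one : ∀ c, 1 < c → c * q c ∈ Iic 1 := fun c hc =>
    (mul_lt_one_of_eq_exp hc.le (hq c hc).1.2.ne (hq c hc).2).le
  intro a ha b hb hab
  refine (strictMonoOn_mul_exp_neg.lt_iff_lt (below_one b hb) (below_one a ha)).mp ?_
  simp only [mul_mul_exp_neg_eq_of_eq_exp (hq a ha).2, mul_mul_exp_neg_eq_of_eq_exp (hq b hb).2]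
  exact strictAntiOn_mul_exp_neg (mem_Ici.2 ha.le) (mem_Ici.2 hb.le) hab
end

section
/- Let μ > λ > 0 and set α := log((e^μ−1)/μ) − log((e^λ−1)/λ). Let Z be the sum of independent copies of Q*_λ (Poisson(λ) conditioned positive) and Q_α (Poisson(α)). Then Q*_μ stochastically dominates Z: for every positive integer k, P(Q*_μ ≥ k) ≥ P(Z ≥ k). -/
/-!
Write `T_k(x) = ∑_{j ≥ k} x^j / j!` (`expTail k x`) and `h(t) = (e^t - 1) / t`. With
`α(t) = log h(m) - log h(t)` (`extraRate m t`) one has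
`P(Q*_t + Q_{α(t)} ≥ k) = m / (e^m - 1) · G(t)` for `G(t) = (T_k(t + α(t)) - T_k(α(t))) / t`
(`tailSlope m k t`), and at `t = m`, where `α = 0`, this is `P(Q*_m ≥ k)`. So it suffices that
`G` is nondecreasing on `(0, m]`.

Up to the positive factor `(e^t - 1) t²`, `G'(t)` equals
`(e^t - 1) ((t + α)^(k-1) - α^(k-1)) / (k-1)! - t (T_{k-1}(t + α) - e^t T_{k-1}(α))`.
Expanding `T_{k-1}(t + α)` binomially in powers of `α` splits this into the terms
`α^j / j! · ((e^t - 1) t^r / r! - t T_r(t))` with `r = k - 1 - j ≥ 1`. They are nonnegative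
because `α ≥ 0` (convexity of `exp` makes `h` increasing) and because, coefficientwise in `t`,
the bracket compares `1 / ((n + 1)! r!)` with `1 / (n + r)!`.
-/

open Finset Real
open scoped Nat

noncomputable def expPartialSum (K : ℕ) (x : ℝ) : ℝ := ∑ j ∈ range K, x ^ j / j !

noncomputable def expTail (K : ℕ) (x : ℝ) : ℝ := exp x - expPartialSum K x

lemma summable_pow_div_factorial_nat_add (x : ℝ) (K : ℕ) :
    Summable fun n : ℕ ↦ x ^ (n + K) / (n + K)! :=
  (summable_nat_add_iff K).2 (Real.summable_pow_div_factorial x)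

lemma expTail_eq_tsum (K : ℕ) (x : ℝ) : expTail K x = ∑' n : ℕ, x ^ (n + K) / (n + K)! := by
  have hexp : exp x = ∑' n : ℕ, x ^ n / n ! := by
    rw [exp_eq_exp_ℝ, NormedSpace.exp_eq_tsum_div]
  rw [expTail, expPartialSum, hexp, ← (Real.summable_pow_div_factorial x).sum_add_tsum_nat_add K,
    add_sub_cancel_left]

lemma expTail_one (x : ℝ) : expTail 1 x = exp x - 1 := by
  simp [expTail, expPartialSum]

lemma expTail_succ (K : ℕ) (x : ℝ) : expTail (K + 1) x = expTail K x - x ^ K / K ! := by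
  rw [expTail, expTail, expPartialSum, expPartialSum, sum_range_succ]
  ring

lemma expTail_succ_zero (K : ℕ) : expTail (K + 1) 0 = 0 := by
  simp [expTail, expPartialSum, sum_range_succ']

lemma summable_ite_pow_div_factorial (k : ℕ) (x : ℝ) :
    Summable fun j : ℕ ↦ if k ≤ j then x ^ j / j ! else 0 := by
  refine (summable_nat_add_iff k).1 ((summable_pow_div_factorial_nat_add x k).congr fun n ↦ ?_)
  exact (if_pos (Nat.le_add_left k n)).symm

lemma tsum_ite_pow_div_factorial (k : ℕ) (x : ℝ) :
    ∑' j : ℕ, (if k ≤ j then x ^ j / j ! else 0) = expTail k x := by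
  rw [expTail_eq_tsum, ← (summable_ite_pow_div_factorial k x).sum_add_tsum_nat_add k,
    sum_eq_zero fun j hj ↦ if_neg (by simpa using hj), zero_add]
  exact tsum_congr fun n ↦ if_pos (Nat.le_add_left k n)

lemma tsum_ite_mul_sub_pow_div_factorial (k : ℕ) (c x y : ℝ) :
    ∑' j : ℕ, (if k ≤ j then c * (x ^ j - y ^ j) / j ! else 0) =
      c * (expTail k x - expTail k y) := by
  rw [← tsum_ite_pow_div_factorial, ← tsum_ite_pow_div_factorial,
    ← (summable_ite_pow_div_factorial k x).tsum_sub (summable_ite_pow_div_factorial k y),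
    ← tsum_mul_left]
  refine tsum_congr fun j ↦ ?_
  split_ifs <;> ring

lemma tsum_ite_pow_div_mul_factorial (k : ℕ) (c x : ℝ) :
    ∑' j : ℕ, (if k ≤ j then x ^ j / (c * j !) else 0) = expTail k x / c := by
  rw [← tsum_ite_pow_div_factorial, ← tsum_div_const]
  refine tsum_congr fun j ↦ ?_
  split_ifs
  · rw [div_div, mul_comm]
  · rw [zero_div]

lemma hasDerivAt_expPartialSum (K : ℕ) (x : ℝ) :
    HasDerivAt (expPartialSum (K + 1)) (expPartialSum K x) x := by
  have hterm : ∀ j ∈ range (K + 1),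
      HasDerivAt (fun y : ℝ ↦ y ^ j / j !) (j * x ^ (j - 1) / j !) x :=
    fun j _ ↦ (hasDerivAt_pow j x).div_const _
  refine (HasDerivAt.fun_sum hterm).congr_deriv ?_
  rw [sum_range_succ', expPartialSum]
  simp only [CharP.cast_eq_zero, zero_mul, zero_div, add_zero, Nat.factorial_succ, Nat.cast_mul,
    Nat.add_sub_cancel]
  refine sum_congr rfl fun j _ ↦ ?_
  field_simp

lemma hasDerivAt_expTail (K : ℕ) (x : ℝ) : HasDerivAt (expTail (K + 1)) (expTail K x) x :=
  (hasDerivAt_exp x).sub (hasDerivAt_expPartialSum K x)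

lemma Nat.succ_factorial_mul_succ_factorial_le (n r : ℕ) :
    (n + 1)! * (r + 1)! ≤ (n + r + 1)! := by
  induction r with
  | zero => simp
  | succ r ih =>
    calc (n + 1)! * (r + 1 + 1)! = (r + 2) * ((n + 1)! * (r + 1)!) := by
          rw [Nat.factorial_succ (r + 1)]; ring
      _ ≤ (n + r + 2) * (n + r + 1)! := Nat.mul_le_mul (by omega) ih
      _ = (n + (r + 1) + 1)! := by rw [← add_assoc, Nat.factorial_succ (n + r + 1)]

lemma mul_expTail_succ_le {t : ℝ} (ht : 0 ≤ t) (r : ℕ) :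
    t * expTail (r + 1) t ≤ expTail 1 t * (t ^ (r + 1) / (r + 1)!) := by
  rw [expTail_eq_tsum, expTail_eq_tsum, ← tsum_mul_left, ← tsum_mul_right]
  refine Summable.tsum_le_tsum (fun n ↦ ?_) ((summable_pow_div_factorial_nat_add t _).mul_left t)
    ((summable_pow_div_factorial_nat_add t 1).mul_right _)
  have hfact : ((n + 1)! * (r + 1)! : ℝ) ≤ (n + (r + 1))! := by
    exact_mod_cast Nat.succ_factorial_mul_succ_factorial_le n r
  calc t * (t ^ (n + (r + 1)) / (n + (r + 1))!)
      = t ^ (n + 1 + (r + 1)) / (n + (r + 1))! := by ring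
    _ ≤ t ^ (n + 1 + (r + 1)) / ((n + 1)! * (r + 1)!) := by gcongr
    _ = t ^ (n + 1) / (n + 1)! * (t ^ (r + 1) / (r + 1)!) := by
          rw [pow_add, mul_div_mul_comm]

lemma add_pow_div_factorial (x y : ℝ) (n : ℕ) :
    (x + y) ^ n / n ! = ∑ j ∈ range (n + 1), y ^ j / j ! * (x ^ (n - j) / (n - j)!) := by
  rw [add_comm x y, add_pow, sum_div]
  refine sum_congr rfl fun j hj ↦ ?_
  have hfact : (n.choose j * j ! * (n - j)! : ℝ) = n ! := by
    exact_mod_cast Nat.choose_mul_factorial_mul_factorial (Nat.le_of_lt_succ (mem_range.1 hj))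
  have hchoose : (n.choose j : ℝ) ≠ 0 :=
    Nat.cast_ne_zero.2 (Nat.choose_pos (Nat.le_of_lt_succ (mem_range.1 hj))).ne'
  rw [← hfact]
  field_simp

lemma add_pow_sub_pow_div_factorial (x y : ℝ) (K : ℕ) :
    ((x + y) ^ K - y ^ K) / K ! = ∑ j ∈ range K, y ^ j / j ! * (x ^ (K - j) / (K - j)!) := by
  rw [sub_div, add_pow_div_factorial, sum_range_succ]
  simp

lemma expPartialSum_add (x y : ℝ) (K : ℕ) :
    expPartialSum K (x + y) = ∑ j ∈ range K, y ^ j / j ! * expPartialSum (K - j) x := by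
  simp_rw [expPartialSum, add_pow_div_factorial, mul_sum]
  exact sum_range_diag_flip K fun j i ↦ y ^ j / j ! * (x ^ i / i !)

lemma expTail_add (x y : ℝ) (K : ℕ) :
    expTail K (x + y) =
      exp x * expTail K y + ∑ j ∈ range K, y ^ j / j ! * expTail (K - j) x := by
  rw [expTail, expPartialSum_add, exp_add, expTail, expPartialSum]
  simp only [expTail, mul_sub, sum_sub_distrib, mul_sum]
  rw [← mul_sum, ← sum_mul]
  ring

lemma mul_expTail_add_sub_le {t y : ℝ} (ht : 0 ≤ t) (hy : 0 ≤ y) (K : ℕ) :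
    t * (expTail K (t + y) - exp t * expTail K y) ≤
      expTail 1 t * (((t + y) ^ K - y ^ K) / K !) := by
  rw [expTail_add, add_sub_cancel_left, add_pow_sub_pow_div_factorial, mul_sum, mul_sum]
  refine sum_le_sum fun j hj ↦ ?_
  obtain ⟨r, hr⟩ : ∃ r, K - j = r + 1 :=
    Nat.exists_eq_add_one_of_ne_zero (by simp only [mem_range] at hj; omega)
  rw [hr]
  calc t * (y ^ j / j ! * expTail (r + 1) t) = y ^ j / j ! * (t * expTail (r + 1) t) := by ring
    _ ≤ y ^ j / j ! * (expTail 1 t * (t ^ (r + 1) / (r + 1)!)) :=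
        mul_le_mul_of_nonneg_left (mul_expTail_succ_le ht r) (by positivity)
    _ = expTail 1 t * (y ^ j / j ! * (t ^ (r + 1) / (r + 1)!)) := by ring

lemma exp_sub_one_pos {t : ℝ} (ht : 0 < t) : 0 < exp t - 1 :=
  sub_pos.2 (one_lt_exp_iff.2 ht)

lemma exp_sub_one_div_pos {t : ℝ} (ht : 0 < t) : 0 < (exp t - 1) / t :=
  div_pos (exp_sub_one_pos ht) ht

noncomputable def extraRate (m t : ℝ) : ℝ := log ((exp m - 1) / m) - log ((exp t - 1) / t)

lemma extraRate_self (m : ℝ) : extraRate m m = 0 := sub_self _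

lemma extraRate_nonneg {m t : ℝ} (ht : 0 < t) (htm : t ≤ m) : 0 ≤ extraRate m t := by
  have hslope := convexOn_exp.secant_mono (Set.mem_univ 0) (Set.mem_univ t) (Set.mem_univ m)
    ht.ne' (ht.trans_le htm).ne' htm
  simp only [exp_zero, sub_zero] at hslope
  exact sub_nonneg.2 (log_le_log (exp_sub_one_div_pos ht) hslope)

lemma exp_neg_extraRate {m t : ℝ} (hm : 0 < m) (ht : 0 < t) :
    exp (-extraRate m t) = (exp t - 1) / t / ((exp m - 1) / m) := by
  rw [extraRate, neg_sub, ← log_div (exp_sub_one_div_pos ht).ne' (exp_sub_one_div_pos hm).ne',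
    exp_log (div_pos (exp_sub_one_div_pos ht) (exp_sub_one_div_pos hm))]

lemma hasDerivAt_extraRate (m : ℝ) {t : ℝ} (ht : 0 < t) :
    HasDerivAt (extraRate m) (t⁻¹ - exp t / (exp t - 1)) t := by
  have hE : exp t - 1 ≠ 0 := (exp_sub_one_pos ht).ne'
  have hquot := (((hasDerivAt_exp t).sub_const 1).div (hasDerivAt_id t) ht.ne').log
    (exp_sub_one_div_pos ht).ne'
  refine (hquot.const_sub _).congr_deriv ?_
  simp only [Pi.div_apply, id]
  field_simp
  ring

noncomputable def tailSlope (m : ℝ) (k : ℕ) (t : ℝ) : ℝ :=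
  (expTail k (t + extraRate m t) - expTail k (extraRate m t)) / t

lemma tailSlope_self (m : ℝ) (K : ℕ) : tailSlope m (K + 1) m = expTail (K + 1) m / m := by
  rw [tailSlope, extraRate_self, add_zero, expTail_succ_zero, sub_zero]

lemma hasDerivAt_tailSlope (m : ℝ) {t : ℝ} (ht : 0 < t) (K : ℕ) :
    HasDerivAt (tailSlope m (K + 1))
      ((expTail 1 t * (((t + extraRate m t) ^ K - extraRate m t ^ K) / K !)
          - t * (expTail K (t + extraRate m t) - exp t * expTail K (extraRate m t)))
        / ((exp t - 1) * t ^ 2)) t := by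
  have hA := hasDerivAt_extraRate m ht
  have hE : exp t - 1 ≠ 0 := (exp_sub_one_pos ht).ne'
  have hshifted := (hasDerivAt_expTail K _).comp t ((hasDerivAt_id t).add hA)
  have hshift := (hasDerivAt_expTail K _).comp t hA
  refine ((hshifted.sub hshift).div (hasDerivAt_id t) ht.ne').congr_deriv ?_
  simp only [Pi.add_apply, Pi.sub_apply, Function.comp_apply, id]
  rw [expTail_succ, expTail_succ, expTail_one]
  field_simp
  ring

lemma monotoneOn_tailSlope (m : ℝ) (K : ℕ) :
    MonotoneOn (tailSlope m (K + 1)) (Set.Ioc 0 m) := by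
  have hderiv : ∀ t ∈ Set.Ioc (0 : ℝ) m,
      ∃ d, HasDerivAt (tailSlope m (K + 1)) d t ∧ 0 ≤ d := by
    rintro t ⟨ht, htm⟩
    refine ⟨_, hasDerivAt_tailSlope m ht K, div_nonneg ?_ ?_⟩
    · exact sub_nonneg.2 (mul_expTail_add_sub_le ht.le (extraRate_nonneg ht htm) K)
    · have := exp_sub_one_pos ht
      positivity
  choose! d hd hd_nonneg using hderiv
  refine monotoneOn_of_deriv_nonneg (convex_Ioc 0 m)
    (fun t ht ↦ (hd t ht).continuousAt.continuousWithinAt) ?_ ?_ <;> rw [interior_Ioc]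
  · exact fun t ht ↦ (hd t (Set.Ioo_subset_Ioc_self ht)).differentiableAt.differentiableWithinAt
  · intro t ht
    exact (hd t (Set.Ioo_subset_Ioc_self ht)).deriv ▸ hd_nonneg t (Set.Ioo_subset_Ioc_self ht)

theorem stmt_13 (l m : ℝ) (hl : 0 < l) (hlm : l < m) :
    ∀ k : ℕ, 1 ≤ k →
      (∑' j : ℕ, if k ≤ j then
          Real.exp (-(Real.log ((Real.exp m - 1) / m) - Real.log ((Real.exp l - 1) / l))) /
            (Real.exp l - 1) *
            ((l + (Real.log ((Real.exp m - 1) / m) - Real.log ((Real.exp l - 1) / l))) ^ j -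
              (Real.log ((Real.exp m - 1) / m) - Real.log ((Real.exp l - 1) / l)) ^ j) /
            Nat.factorial j
        else 0)
      ≤ ∑' j : ℕ, if k ≤ j then m ^ j / ((Real.exp m - 1) * Nat.factorial j) else 0 := by
  intro k hk
  obtain ⟨K, rfl⟩ := Nat.exists_eq_add_one_of_ne_zero (Nat.one_le_iff_ne_zero.1 hk)
  have hm : 0 < m := hl.trans hlm
  have hEl : exp l - 1 ≠ 0 := (exp_sub_one_pos hl).ne'
  have hEm : exp m - 1 ≠ 0 := (exp_sub_one_pos hm).ne'
  rw [tsum_ite_mul_sub_pow_div_factorial, tsum_ite_pow_div_mul_factorial, ← extraRate]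
  calc _ = m / (exp m - 1) * tailSlope m (K + 1) l := by
        rw [tailSlope, exp_neg_extraRate hm hl]
        field_simp
    _ ≤ m / (exp m - 1) * tailSlope m (K + 1) m := by
        have := exp_sub_one_pos hm
        gcongr
        exact monotoneOn_tailSlope m K ⟨hl, hlm.le⟩ ⟨hm, le_rfl⟩ hlm.le
    _ = _ := by
        rw [tailSlope_self]
        field_simp
end

section
/- Let a ≥ 1 and b ≥ 0 be integers, F a convex increasing function on [0, ∞), and X_1, …, X_a, Y_1, …, Y_b independent non-negative real random variables such that each X_i stochastically dominates each Y_j. Then E[F((1/(a+b))(Σ_{i=1}^a X_i + Σ_{i=1}^b Y_i))] ≤ E[F((1/a) Σ_{i=1}^a X_i)]. -/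
/-!
Write `Z` for the combined family `X, Y` and `n = a + b`. The overall mean `(1/n) ∑ Z` is the
average, over all `a`-element sets `A` of indices, of the partial means `(1/a) ∑_{i ∈ A} Z i`, so
by Jensen it suffices to bound `E F((1/a) ∑_{i ∈ A} Z i)` for each `A`. Pair the indices of `A`
with those of `X`, keeping every `X k` that lies in `A` paired with itself; then each member of
`A` is stochastically dominated by its partner. Independence turns both expectations into
integrals against product measures, and an increasing function of the coordinates has a larger
integral against the product of the larger marginals (layer-cake formula, one coordinate at a
time), so `E F((1/a) ∑_{i ∈ A} Z i) ≤ E F((1/a) ∑ X)`.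
-/

open MeasureTheory ProbabilityTheory Set
open scoped ENNReal Finset

theorem Finset.sum_powersetCard_sum {ι M : Type*} [AddCommMonoid M] [DecidableEq ι]
    (s : Finset ι) {k : ℕ} (hk : 1 ≤ k) (f : ι → M) :
    ∑ A ∈ s.powersetCard k, ∑ i ∈ A, f i = (#s - 1).choose (k - 1) • ∑ i ∈ s, f i := by
  rw [Finset.sum_comm' (t' := s) (s' := fun i => (s.powersetCard k).filter ({i} ⊆ ·))]
  · rw [Finset.smul_sum]
    refine Finset.sum_congr rfl fun i hi => ?_
    rw [Finset.sum_const, Finset.card_filter_powersetCard_subset _ _ _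
      (Finset.singleton_subset_iff.2 hi) (by simpa using hk), Finset.card_singleton]
  · intro A i
    simp only [Finset.mem_powersetCard, Finset.mem_filter, Finset.singleton_subset_iff]
    exact ⟨fun ⟨⟨hAs, hA⟩, hi⟩ => ⟨⟨⟨hAs, hA⟩, hi⟩, hAs hi⟩, fun ⟨h, _⟩ => h⟩

theorem ConvexOn.le_average_powersetCard {ι E : Type*} [AddCommGroup E] [Module ℝ E]
    [DecidableEq ι] {s : Set E} {f : E → ℝ} (hf : ConvexOn ℝ s f) (t : Finset ι) {k : ℕ}
    (hk : 1 ≤ k) (hkt : k ≤ #t) (v : ι → E)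
    (hv : ∀ A ∈ t.powersetCard k, (k : ℝ)⁻¹ • ∑ i ∈ A, v i ∈ s) :
    f ((#t : ℝ)⁻¹ • ∑ i ∈ t, v i)
      ≤ ((#t).choose k : ℝ)⁻¹ * ∑ A ∈ t.powersetCard k, f ((k : ℝ)⁻¹ • ∑ i ∈ A, v i) := by
  have hC : ((#t).choose k : ℝ) ≠ 0 := Nat.cast_ne_zero.2 (Nat.choose_pos hkt).ne'
  have hk0 : (k : ℝ) ≠ 0 := Nat.cast_ne_zero.2 (by omega)
  have ht0 : (#t : ℝ) ≠ 0 := Nat.cast_ne_zero.2 (by omega)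
  have hcount : ((#t - 1).choose (k - 1) : ℝ) * #t = (#t).choose k * k := by
    obtain ⟨n, hn⟩ : ∃ n, #t = n + 1 := ⟨#t - 1, by omega⟩
    obtain ⟨j, rfl⟩ : ∃ j, k = j + 1 := ⟨k - 1, by omega⟩
    rw [hn, Nat.add_sub_cancel, Nat.add_sub_cancel]
    exact_mod_cast (mul_comm _ _).trans (Nat.add_one_mul_choose_eq n j)
  have hmean : ∑ A ∈ t.powersetCard k, ((#t).choose k : ℝ)⁻¹ • (k : ℝ)⁻¹ • ∑ i ∈ A, v i
      = (#t : ℝ)⁻¹ • ∑ i ∈ t, v i := by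
    rw [← Finset.smul_sum, ← Finset.smul_sum, Finset.sum_powersetCard_sum t hk,
      ← Nat.cast_smul_eq_nsmul ℝ, smul_smul, smul_smul]
    congr 1
    field_simp
    exact hcount
  have := hf.map_sum_le (t := t.powersetCard k) (w := fun _ => ((#t).choose k : ℝ)⁻¹)
    (fun _ _ => by positivity) (by simp [Finset.card_powersetCard, hC]) hv
  rwa [hmean, ← Finset.smul_sum, smul_eq_mul] at this

theorem ConvexOn.exists_sub_const_monotone {F : ℝ → ℝ} (hFconv : ConvexOn ℝ (Ici 0) F)
    (hFmono : MonotoneOn F (Ici 0)) :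
    ∃ G : ℝ → ℝ, ConvexOn ℝ (Ici 0) G ∧ Monotone G ∧ 0 ≤ G ∧ ∀ x, 0 ≤ x → G x = F x - F 0 := by
  have hGF (x : ℝ) (hx : 0 ≤ x) : F (max x 0) - F 0 = F x - F 0 := by rw [max_eq_left hx]
  refine ⟨fun x => F (max x 0) - F 0, ?_, fun x y hxy => ?_, fun x => ?_, hGF⟩
  · exact (hFconv.add_const (-F 0)).congr fun x hx => by
      rw [hGF x hx, sub_eq_add_neg]
      rfl
  · exact sub_le_sub_right (hFmono (le_max_right x 0) (le_max_right y 0) (max_le_max_right 0 hxy)) _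
  · exact sub_nonneg.2 (hFmono self_mem_Ici (le_max_right x 0) (le_max_right x 0))

theorem Finset.exists_equiv_of_card_eq_card_left {ι κ : Type*} [Fintype ι] [DecidableEq ι]
    [DecidableEq κ] (A : Finset (ι ⊕ κ)) (hA : #A = Fintype.card ι) :
    ∃ e : ι ≃ A, ∀ k, (e k : ι ⊕ κ) = .inl k ∨ ∃ j, (e k : ι ⊕ κ) = .inr j := by
  obtain ⟨e, he⟩ := Finset.exists_equiv_extend_of_card_eq hA.symm (s := A.toLeft)
    (f := Sum.inl) (fun _ hx => by
      obtain ⟨k, hk, rfl⟩ := Finset.mem_image.1 hx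
      exact Finset.mem_toLeft.1 hk) Sum.inl_injective.injOn
  refine ⟨e, fun k => ?_⟩
  rcases hek : (e k : ι ⊕ κ) with k' | j
  · have hk' : k' ∈ A.toLeft := Finset.mem_toLeft.2 (hek ▸ (e k).2)
    have : e k' = e k := Subtype.ext ((he k' hk').trans hek.symm)
    exact .inl (by rw [e.injective this])
  · exact .inr ⟨j, rfl⟩

def StochasticallyLE (μ ν : Measure ℝ) : Prop := ∀ t, μ (Ici t) ≤ ν (Ici t)

namespace StochasticallyLE

variable {μ ν : Measure ℝ}

theorem measure_le_of_isUpperSet [μ.InnerRegular] (h : StochasticallyLE μ ν) {U : Set ℝ}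
    (hU : IsUpperSet U) : μ U ≤ ν U := by
  rw [hU.ordConnected.measurableSet.measure_eq_iSup_isCompact]
  refine iSup₂_le fun K hKU => iSup_le fun hK => ?_
  rcases K.eq_empty_or_nonempty with rfl | hne
  · simp
  -- a nonempty compact `K ⊆ U` lies in the ray above its minimum, which is still inside `U`
  calc μ K ≤ μ (Ici (sInf K)) := measure_mono fun x hx => csInf_le hK.bddBelow hx
    _ ≤ ν (Ici (sInf K)) := h _
    _ ≤ ν U := measure_mono (hU.Ici_subset (hKU (hK.sInf_mem hne)))

theorem lintegral_ofReal_le [μ.InnerRegular] (h : StochasticallyLE μ ν) {f : ℝ → ℝ}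
    (hf : Monotone f) (hf0 : 0 ≤ f) :
    ∫⁻ x, ENNReal.ofReal (f x) ∂μ ≤ ∫⁻ x, ENNReal.ofReal (f x) ∂ν := by
  rw [lintegral_eq_lintegral_meas_lt μ (.of_forall hf0) hf.measurable.aemeasurable,
    lintegral_eq_lintegral_meas_lt ν (.of_forall hf0) hf.measurable.aemeasurable]
  exact lintegral_mono fun t =>
    h.measure_le_of_isUpperSet fun x y hxy hx => hx.trans_le (hf hxy)

theorem lintegral_le [μ.InnerRegular] (h : StochasticallyLE μ ν) {g : ℝ → ℝ≥0∞}
    (hg : Monotone g) : ∫⁻ x, g x ∂μ ≤ ∫⁻ x, g x ∂ν := by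
  -- the layer-cake formula needs a real-valued integrand: truncate `g` at `n` and let `n → ∞`
  have htrunc (n : ℕ) : Monotone fun x => min (g x) n := fun _ _ hxy => min_le_min_right _ (hg hxy)
  have hfin (n : ℕ) (x : ℝ) : min (g x) n ≠ ∞ :=
    ne_top_of_le_ne_top (ENNReal.natCast_ne_top n) (min_le_right _ _)
  have hsup (x : ℝ) : ⨆ n : ℕ, min (g x) n = g x := by
    rw [← inf_iSup_eq, ENNReal.iSup_natCast, inf_top_eq]
  calc ∫⁻ x, g x ∂μ = ∫⁻ x, ⨆ n : ℕ, min (g x) n ∂μ := lintegral_congr fun x => (hsup x).symm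
    _ = ⨆ n : ℕ, ∫⁻ x, min (g x) n ∂μ :=
        lintegral_iSup (fun n => (htrunc n).measurable)
          fun m n hmn x => min_le_min_left _ (by exact_mod_cast hmn)
    _ ≤ ∫⁻ x, g x ∂ν := iSup_le fun n => calc
        ∫⁻ x, min (g x) n ∂μ = ∫⁻ x, ENNReal.ofReal (min (g x) n).toReal ∂μ := by
          simp_rw [ENNReal.ofReal_toReal (hfin n _)]
      _ ≤ ∫⁻ x, ENNReal.ofReal (min (g x) n).toReal ∂ν :=
          h.lintegral_ofReal_le (fun x y hxy => ENNReal.toReal_mono (hfin n y) (htrunc n hxy))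
            fun x => ENNReal.toReal_nonneg
      _ = ∫⁻ x, min (g x) n ∂ν := by simp_rw [ENNReal.ofReal_toReal (hfin n _)]
      _ ≤ ∫⁻ x, g x ∂ν := lintegral_mono fun x => min_le_left _ _

theorem lintegral_pi_le : ∀ {m : ℕ} {μ ν : Fin m → Measure ℝ} [∀ k, SigmaFinite (μ k)]
    [∀ k, SigmaFinite (ν k)], (∀ k, StochasticallyLE (μ k) (ν k)) →
    ∀ {g : (Fin m → ℝ) → ℝ≥0∞}, Monotone g → Measurable g →
    ∫⁻ x, g x ∂Measure.pi μ ≤ ∫⁻ x, g x ∂Measure.pi ν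
  | 0, μ, ν, _, _, _, g, _, _ => by
    rw [Measure.pi_of_empty, Measure.pi_of_empty]
  | m + 1, μ, ν, _, _, h, g, hg, hgm => by
    let e := MeasurableEquiv.piFinSuccAbove (fun _ : Fin (m + 1) => ℝ) 0
    have hmono : Monotone fun p => g (e.symm p) := fun p q hpq => hg <| by
      simp only [e, MeasurableEquiv.piFinSuccAbove_symm_apply, Fin.insertNthEquiv,
        Equiv.coe_fn_mk, Fin.insertNth_zero']
      exact Fin.cons_le_cons.2 hpq
    have hm : Measurable fun p => g (e.symm p) := hgm.comp e.symm.measurable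
    calc ∫⁻ x, g x ∂Measure.pi μ
        = ∫⁻ x₀, ∫⁻ r, g (e.symm (x₀, r)) ∂Measure.pi (fun j => μ j.succ) ∂μ 0 := by
          rw [← (measurePreserving_piFinSuccAbove μ 0).symm.lintegral_comp_emb
            e.symm.measurableEmbedding, lintegral_prod _ hm.aemeasurable]
          rfl
      _ ≤ ∫⁻ x₀, ∫⁻ r, g (e.symm (x₀, r)) ∂Measure.pi (fun j => ν j.succ) ∂μ 0 :=
          lintegral_mono fun x₀ => lintegral_pi_le (fun j => h j.succ)
            (fun r s hrs => hmono ⟨le_rfl, hrs⟩) (hm.comp measurable_prodMk_left)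
      _ ≤ ∫⁻ x₀, ∫⁻ r, g (e.symm (x₀, r)) ∂Measure.pi (fun j => ν j.succ) ∂ν 0 :=
          (h 0).lintegral_le fun x y hxy => lintegral_mono fun r => hmono ⟨hxy, le_rfl⟩
      _ = ∫⁻ x, g x ∂Measure.pi ν := by
          rw [← (measurePreserving_piFinSuccAbove ν 0).symm.lintegral_comp_emb
            e.symm.measurableEmbedding, lintegral_prod _ hm.aemeasurable]
          rfl

end StochasticallyLE

theorem lintegral_ofReal_le_of_le_average {Ω κ : Type*} [MeasurableSpace Ω] {P : Measure Ω}
    {S : Finset κ} {f : Ω → ℝ} {h : κ → Ω → ℝ} (hh0 : ∀ A ∈ S, ∀ ω, 0 ≤ h A ω)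
    (hhm : ∀ A ∈ S, AEMeasurable (h A) P) (hle : ∀ ω, f ω ≤ (#S : ℝ)⁻¹ * ∑ A ∈ S, h A ω)
    {R : ℝ≥0∞} (hR : ∀ A ∈ S, ∫⁻ ω, ENNReal.ofReal (h A ω) ∂P ≤ R) :
    ∫⁻ ω, ENNReal.ofReal (f ω) ∂P ≤ R :=
  calc ∫⁻ ω, ENNReal.ofReal (f ω) ∂P
      ≤ ∫⁻ ω, ENNReal.ofReal (#S : ℝ)⁻¹ * ∑ A ∈ S, ENNReal.ofReal (h A ω) ∂P :=
        lintegral_mono fun ω => by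
          rw [← ENNReal.ofReal_sum_of_nonneg fun A hA => hh0 A hA ω,
            ← ENNReal.ofReal_mul (by positivity)]
          exact ENNReal.ofReal_le_ofReal (hle ω)
    _ = ENNReal.ofReal (#S : ℝ)⁻¹ * ∑ A ∈ S, ∫⁻ ω, ENNReal.ofReal (h A ω) ∂P := by
        rw [lintegral_const_mul' _ _ ENNReal.ofReal_ne_top,
          lintegral_finsetSum' _ fun A hA => (hhm A hA).ennreal_ofReal]
    _ ≤ ENNReal.ofReal (#S : ℝ)⁻¹ * (#S * R) := by
        grw [Finset.sum_le_card_nsmul S _ R hR, nsmul_eq_mul]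
    _ ≤ R := by
        rw [← mul_assoc, ← ENNReal.ofReal_natCast, ← ENNReal.ofReal_mul (by positivity)]
        exact mul_le_of_le_one_left'
          (ENNReal.ofReal_le_one.2 (inv_mul_le_one_of_le₀ le_rfl (by positivity)))

theorem integral_le_integral_of_lintegral_ofReal_sub_le {Ω : Type*} [MeasurableSpace Ω]
    {P : Measure Ω} [IsFiniteMeasure P] {f g : Ω → ℝ} {c : ℝ} (hf : Integrable f P)
    (hg : Integrable g P) (hfc : ∀ ω, c ≤ f ω) (hgc : ∀ ω, c ≤ g ω)
    (h : ∫⁻ ω, ENNReal.ofReal (f ω - c) ∂P ≤ ∫⁻ ω, ENNReal.ofReal (g ω - c) ∂P) :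
    ∫ ω, f ω ∂P ≤ ∫ ω, g ω ∂P := by
  have hfc' : Integrable (fun ω => f ω - c) P := hf.sub (integrable_const c)
  have hgc' : Integrable (fun ω => g ω - c) P := hg.sub (integrable_const c)
  rw [← ofReal_integral_eq_lintegral_ofReal hfc' (.of_forall fun ω => sub_nonneg.2 (hfc ω)),
    ← ofReal_integral_eq_lintegral_ofReal hgc' (.of_forall fun ω => sub_nonneg.2 (hgc ω)),
    ENNReal.ofReal_le_ofReal_iff (integral_nonneg fun ω => sub_nonneg.2 (hgc ω)),
    integral_sub hf (integrable_const c), integral_sub hg (integrable_const c)] at h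
  linarith

section Independent

variable {Ω Ω' ι : Type*} [MeasurableSpace Ω] [MeasurableSpace Ω'] [Fintype ι]

theorem lintegral_comp_sum_eq_lintegral_pi {P : Measure Ω} {W : ι → Ω → ℝ}
    (hWm : ∀ k, Measurable (W k)) (hW : iIndepFun W P) {g : ℝ → ℝ≥0∞} (hgm : Measurable g) :
    ∫⁻ ω, g (∑ k, W k ω) ∂P = ∫⁻ x, g (∑ k, x k) ∂Measure.pi (fun k => P.map (W k)) := by
  have hmeas : Measurable fun x : ι → ℝ => g (∑ k, x k) := by fun_prop
  rw [← hW.map_fun_eq_pi_map fun k => (hWm k).aemeasurable,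
    lintegral_map hmeas (measurable_pi_lambda _ hWm)]

theorem lintegral_sum_le_of_iIndepFun {P : Measure Ω} {Q : Measure Ω'}
    {Z : ι → Ω → ℝ} {X : ι → Ω' → ℝ} (hZm : ∀ k, Measurable (Z k)) (hXm : ∀ k, Measurable (X k))
    (hZ : iIndepFun Z P) (hX : iIndepFun X Q)
    (hdom : ∀ k, StochasticallyLE (P.map (Z k)) (Q.map (X k))) {g : ℝ → ℝ≥0∞}
    (hg : Monotone g) : ∫⁻ ω, g (∑ k, Z k ω) ∂P ≤ ∫⁻ ω, g (∑ k, X k ω) ∂Q := by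
  have := hZ.isProbabilityMeasure
  have := hX.isProbabilityMeasure
  have hgm : Measurable g := hg.measurable
  let σ := (Fintype.equivFin ι).symm
  have hZσ (ω : Ω) : ∑ k, Z k ω = ∑ j, Z (σ j) ω := (σ.sum_comp _).symm
  have hXσ (ω : Ω') : ∑ k, X k ω = ∑ j, X (σ j) ω := (σ.sum_comp _).symm
  simp only [hZσ, hXσ]
  rw [lintegral_comp_sum_eq_lintegral_pi (fun j => hZm (σ j)) (hZ.precomp σ.injective) hgm,
    lintegral_comp_sum_eq_lintegral_pi (fun j => hXm (σ j)) (hX.precomp σ.injective) hgm]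
  exact StochasticallyLE.lintegral_pi_le (fun j => hdom (σ j))
    (fun x y hxy => hg (Finset.sum_le_sum fun j _ => hxy j)) (by fun_prop)

theorem lintegral_sum_finset_le {κ : Type*} [Fintype κ] {P : Measure Ω} {X : ι → Ω → ℝ}
    {Y : κ → Ω → ℝ} (hXm : ∀ i, Measurable (X i)) (hYm : ∀ j, Measurable (Y j))
    (hindep : iIndepFun (Sum.elim X Y) P)
    (hdom : ∀ i j, StochasticallyLE (P.map (Y j)) (P.map (X i)))
    {A : Finset (ι ⊕ κ)} (hA : #A = Fintype.card ι) {g : ℝ → ℝ≥0∞} (hg : Monotone g) :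
    ∫⁻ ω, g (∑ i ∈ A, Sum.elim X Y i ω) ∂P ≤ ∫⁻ ω, g (∑ i, X i ω) ∂P := by
  classical
  obtain ⟨e, he⟩ := A.exists_equiv_of_card_eq_card_left hA
  have hsum (ω : Ω) : ∑ i ∈ A, Sum.elim X Y i ω = ∑ k, Sum.elim X Y (e k) ω := by
    rw [← Finset.sum_coe_sort A]
    exact (e.sum_comp _).symm
  have hZm : ∀ i, Measurable (Sum.elim X Y i) := Sum.rec hXm hYm
  simp only [hsum]
  refine lintegral_sum_le_of_iIndepFun (fun k => hZm _) hXm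
    (hindep.precomp (Subtype.val_injective.comp e.injective))
    (hindep.precomp (g := Sum.inl) Sum.inl_injective) (fun k => ?_) hg
  rw [Function.comp_apply]
  rcases he k with h | ⟨j, h⟩ <;> rw [h]
  exacts [fun t => le_rfl, hdom k j]

theorem lintegral_average_le {κ : Type*} [Fintype κ] [Nonempty ι] {P : Measure Ω} {G : ℝ → ℝ}
    (hGconv : ConvexOn ℝ (Ici 0) G) (hGmono : Monotone G) (hG0 : 0 ≤ G)
    {X : ι → Ω → ℝ} {Y : κ → Ω → ℝ} (hXm : ∀ i, Measurable (X i)) (hYm : ∀ j, Measurable (Y j))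
    (hXnn : ∀ i ω, 0 ≤ X i ω) (hYnn : ∀ j ω, 0 ≤ Y j ω) (hindep : iIndepFun (Sum.elim X Y) P)
    (hdom : ∀ i j, StochasticallyLE (P.map (Y j)) (P.map (X i))) :
    ∫⁻ ω, ENNReal.ofReal
        (G ((Fintype.card ι + Fintype.card κ : ℝ)⁻¹ * (∑ i, X i ω + ∑ j, Y j ω))) ∂P
      ≤ ∫⁻ ω, ENNReal.ofReal (G ((Fintype.card ι : ℝ)⁻¹ * ∑ i, X i ω)) ∂P := by
  classical
  have hZm : ∀ i, Measurable (Sum.elim X Y i) := Sum.rec hXm hYm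
  have hZnn : ∀ i ω, 0 ≤ Sum.elim X Y i ω := Sum.rec hXnn hYnn
  have hGm : Measurable G := hGmono.measurable
  refine lintegral_ofReal_le_of_le_average (S := Finset.univ.powersetCard (Fintype.card ι))
    (h := fun A ω => G ((Fintype.card ι : ℝ)⁻¹ * ∑ i ∈ A, Sum.elim X Y i ω))
    (fun _ _ _ => hG0 _) (fun A _ => ?_) (fun ω => ?_) (fun A hA => ?_)
  · fun_prop
  · have := hGconv.le_average_powersetCard Finset.univ (Fintype.card_pos (α := ι)) (by simp)
      (Sum.elim X Y · ω) fun A _ =>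
        mem_Ici.2 (smul_nonneg (by positivity) (Finset.sum_nonneg fun i _ => hZnn i ω))
    simpa [Fintype.sum_sum_type, Finset.card_powersetCard, smul_eq_mul] using this
  · exact lintegral_sum_finset_le hXm hYm hindep hdom (Finset.mem_powersetCard_univ.1 hA)
      (g := fun s => ENNReal.ofReal (G ((Fintype.card ι : ℝ)⁻¹ * s)))
      fun s t hst => ENNReal.ofReal_le_ofReal (hGmono (by gcongr))

end Independent

theorem stmt_14 {Ω : Type*} [MeasurableSpace Ω] (P : Measure Ω) [IsProbabilityMeasure P]
    (a b : ℕ) (ha : 1 ≤ a)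
    (F : ℝ → ℝ) (hFconv : ConvexOn ℝ (Set.Ici (0 : ℝ)) F)
    (hFmono : MonotoneOn F (Set.Ici (0 : ℝ)))
    (X : Fin a → Ω → ℝ) (Y : Fin b → Ω → ℝ)
    (hXm : ∀ i, Measurable (X i)) (hYm : ∀ j, Measurable (Y j))
    (hXnn : ∀ i ω, 0 ≤ X i ω) (hYnn : ∀ j ω, 0 ≤ Y j ω)
    (hindep : ProbabilityTheory.iIndepFun
      (Sum.elim X Y : Fin a ⊕ Fin b → Ω → ℝ) P)
    (hdom : ∀ i j (t : ℝ), P {ω | t ≤ Y j ω} ≤ P {ω | t ≤ X i ω})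
    (hint1 : Integrable (fun ω => F ((1 / (a + b : ℝ)) * (∑ i, X i ω + ∑ j, Y j ω))) P)
    (hint2 : Integrable (fun ω => F ((1 / (a : ℝ)) * ∑ i, X i ω)) P) :
    ∫ ω, F ((1 / (a + b : ℝ)) * (∑ i, X i ω + ∑ j, Y j ω)) ∂P
      ≤ ∫ ω, F ((1 / (a : ℝ)) * ∑ i, X i ω) ∂P := by
  have : Nonempty (Fin a) := ⟨⟨0, ha⟩⟩
  -- `G` is nonnegative and monotone on all of `ℝ`, so every expectation can be taken as a lower
  -- Lebesgue integral, without knowing integrability of the intermediate terms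
  obtain ⟨G, hGconv, hGmono, hG0, hGF⟩ := hFconv.exists_sub_const_monotone hFmono
  have hF0 : ∀ x, 0 ≤ x → F 0 ≤ F x := fun x hx => hFmono self_mem_Ici hx hx
  have hmean_nonneg (ω : Ω) : 0 ≤ 1 / (a + b : ℝ) * (∑ i, X i ω + ∑ j, Y j ω) :=
    mul_nonneg (by positivity) (add_nonneg (Finset.sum_nonneg fun i _ => hXnn i ω)
      (Finset.sum_nonneg fun j _ => hYnn j ω))
  have hmeanX_nonneg (ω : Ω) : 0 ≤ 1 / (a : ℝ) * ∑ i, X i ω :=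
    mul_nonneg (by positivity) (Finset.sum_nonneg fun i _ => hXnn i ω)
  have key := lintegral_average_le hGconv hGmono hG0 hXm hYm hXnn hYnn hindep fun i j t => by
    rw [Measure.map_apply (hYm j) measurableSet_Ici, Measure.map_apply (hXm i) measurableSet_Ici]
    exact hdom i j t
  simp only [Fintype.card_fin, ← one_div] at key
  refine integral_le_integral_of_lintegral_ofReal_sub_le hint1 hint2
    (fun ω => hF0 _ (hmean_nonneg ω)) (fun ω => hF0 _ (hmeanX_nonneg ω)) ?_
  convert key using 4 with ω ω
  · rw [hGF _ (hmean_nonneg ω)]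
  · rw [hGF _ (hmeanX_nonneg ω)]
end

section
/- Let q : (1, ∞) → (0, 1) be defined implicitly by q(c) = e^{−c(1−q(c))}. Then lim_{c → ∞} c·q(c) = 0. -/
/-!
Put `x = c q(c)`. The fixed-point equation gives `x e^{-x} = c e^{-c}` with `0 < x < c`; since
`t ↦ t e^{-t}` increases on `(0, 1]` and decreases on `[1, ∞)`, this forces `x < 1`. Then
`x ≤ e · x e^{-x} = e · c e^{-c} → 0`.
-/

open Filter Real

lemma mul_mul_exp_neg_mul_eq {c q : ℝ} (hq : q = exp (-c * (1 - q))) :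
    c * q * exp (-(c * q)) = c * exp (-c) := by
  calc c * q * exp (-(c * q)) = c * (exp (-c * (1 - q)) * exp (-(c * q))) := by
        nth_rw 1 [hq]; ring
    _ = c * exp (-c) := by rw [← exp_add]; ring_nf

lemma lt_one_of_mul_exp_neg_eq {x c : ℝ} (hx : 0 < x) (hxc : x < c)
    (h : x * exp (-x) = c * exp (-c)) : x < 1 := by
  by_contra! hx1
  have hxc' : x * exp (c - x) = c := by
    calc x * exp (c - x) = x * exp (-x) * exp c := by rw [mul_assoc, ← exp_add]; ring_nf
      _ = c := by rw [h, mul_assoc, ← exp_add, neg_add_cancel, exp_zero, mul_one]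
  have hexp : c - x + 1 < exp (c - x) := add_one_lt_exp (sub_ne_zero.2 hxc.ne')
  nlinarith

lemma le_exp_one_mul_mul_exp_neg {x : ℝ} (hx : 0 ≤ x) (hx1 : x ≤ 1) :
    x ≤ exp 1 * (x * exp (-x)) := by
  calc x = x * (exp 1 * exp (-1)) := by rw [← exp_add, add_neg_cancel, exp_zero, mul_one]
    _ ≤ x * (exp 1 * exp (-x)) := by gcongr
    _ = exp 1 * (x * exp (-x)) := by ring

theorem stmt_17 (q : ℝ → ℝ)
    (hq : ∀ c : ℝ, 1 < c → q c ∈ Set.Ioo (0 : ℝ) 1 ∧ q c = Real.exp (-c * (1 - q c))) :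
    Filter.Tendsto (fun c => c * q c) Filter.atTop (nhds 0) := by
  have hbound : Tendsto (fun c : ℝ => exp 1 * (c * exp (-c))) atTop (nhds 0) := by
    simpa using (tendsto_pow_mul_exp_neg_atTop_nhds_zero 1).const_mul (exp 1)
  refine squeeze_zero' ?_ ?_ hbound <;> filter_upwards [eventually_gt_atTop 1] with c hc
  all_goals obtain ⟨⟨hq0, hq1⟩, hfix⟩ := hq c hc
  · positivity
  · have hx : 0 < c * q c := by positivity
    have hxc : c * q c < c := mul_lt_of_lt_one_right (by linarith) hq1
    have hkey := mul_mul_exp_neg_mul_eq hfix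
    rw [← hkey]
    exact le_exp_one_mul_mul_exp_neg hx.le (lt_one_of_mul_exp_neg_eq hx hxc hkey).le
end
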